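/- arXiv:1509.08813 — 5 statements merged into one kernel-verified Lean document; each statement's English description precedes it below -/
import Mathlib

section
/- Every transitive compact dynamical system (X,T) is Li-Yorke sensitive, i.e., there exists δ > 0 such that for every point x ∈ X and every neighborhood U of x there is a point y ∈ U with liminf_{n→∞} d(Tⁿx, Tⁿy) = 0 and limsup_{n→∞} d(Tⁿx, Tⁿy) > δ. -/
open Filter Topology Set Metric

section Defs

variable {X : Type*}

/-- A set is "opene" if it is open and nonempty. -/
def Opene [TopologicalSpace X] (U : Set X) : Prop := IsOpen U ∧ U.Nonempty

/-- `N_T(U,V) = {n ∈ ℕ : U ∩ T⁻ⁿV ≠ ∅}`. -/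
def NTset (T : X → X) (U V : Set X) : Set ℕ := {n | (U ∩ T^[n] ⁻¹' V).Nonempty}

/-- `N_T(x,G) = {n ∈ ℕ : Tⁿx ∈ G}`. -/
def NTpt (T : X → X) (x : X) (G : Set X) : Set ℕ := {n | T^[n] x ∈ G}

/-- `ω_{N_T}(x)`. -/
def omegaNT [TopologicalSpace X] (T : X → X) (x : X) : Set X :=
  {z | ∀ G : Set X, IsOpen G → z ∈ G → ∀ U V : Set X, Opene U → Opene V →
    (NTpt T x G ∩ NTset T U V).Nonempty}

/-- The ω-limit set `ω_T(x)`. -/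
def omegaT [TopologicalSpace X] (T : X → X) (x : X) : Set X :=
  {z | ∀ G : Set X, IsOpen G → z ∈ G → (NTpt T x G).Infinite}

/-- Transitive compact system. -/
def TransCompact [TopologicalSpace X] (T : X → X) : Prop :=
  ∀ x : X, (omegaNT T x).Nonempty

/-- Topologically transitive system. -/
def TopTransitive [TopologicalSpace X] (T : X → X) : Prop :=
  ∀ U V : Set X, Opene U → Opene V → (NTset T U V).Nonempty

/-- Weakly mixing: the product system `(X×X, T×T)` is topologically transitive. -/
def WeaklyMixing [TopologicalSpace X] (T : X → X) : Prop :=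
  TopTransitive (fun p : X × X => (T p.1, T p.2))

/-- Totally transitive: `(X, T^k)` is transitive for every `k ≥ 1`. -/
def TotallyTransitive [TopologicalSpace X] (T : X → X) : Prop :=
  ∀ k : ℕ, 1 ≤ k → TopTransitive (T^[k])

/-- Minimal system: every point has dense orbit. -/
def MinimalSystem [TopologicalSpace X] (T : X → X) : Prop :=
  ∀ x : X, Dense (Set.range fun n : ℕ => T^[n] x)

/-- A minimal subset: nonempty, closed, `T M = M`, with no proper nonempty closed invariant subset. -/
def IsMinimalSubset [TopologicalSpace X] (T : X → X) (M : Set X) : Prop :=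
  M.Nonempty ∧ IsClosed M ∧ T '' M = M ∧
    ∀ M' : Set X, M' ⊆ M → M'.Nonempty → IsClosed M' → T '' M' = M' → M' = M

/-- A minimal point: one that lies in some minimal subset. -/
def IsMinimalPoint [TopologicalSpace X] (T : X → X) (x : X) : Prop :=
  ∃ M : Set X, IsMinimalSubset T M ∧ x ∈ M

/-- An M-system: transitive with a dense set of minimal points. -/
def MSystem [TopologicalSpace X] (T : X → X) : Prop :=
  TopTransitive T ∧ Dense {x : X | IsMinimalPoint T x}

/-- Thick subset of ℕ. -/
def ThickSet (S : Set ℕ) : Prop := ∀ N : ℕ, ∃ m : ℕ, ∀ i ≤ N, m + i ∈ S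

/-- Syndetic subset of ℕ. -/
def SyndeticSet (S : Set ℕ) : Prop := ∃ N : ℕ, ∀ i : ℕ, ∃ j ≤ N, i + j ∈ S

/-- Thickly syndetic subset of ℕ. -/
def ThicklySyndeticSet (S : Set ℕ) : Prop :=
  ∀ N : ℕ, SyndeticSet {m : ℕ | ∀ i ≤ N, m + i ∈ S}

/-- `S_T(U,δ)`. -/
def STset [MetricSpace X] (T : X → X) (U : Set X) (δ : ℝ) : Set ℕ :=
  {n | ∃ x ∈ U, ∃ y ∈ U, δ < dist (T^[n] x) (T^[n] y)}

/-- Thickly sensitive system. -/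
def ThicklySensitive [MetricSpace X] (T : X → X) : Prop :=
  ∃ δ : ℝ, 0 < δ ∧ ∀ U : Set X, Opene U → ThickSet (STset T U δ)

/-- Thickly syndetically sensitive system. -/
def ThicklySyndeticallySensitive [MetricSpace X] (T : X → X) : Prop :=
  ∃ δ : ℝ, 0 < δ ∧ ∀ U : Set X, Opene U → ThicklySyndeticSet (STset T U δ)

/-- Multi-sensitive system. -/
def MultiSensitive [MetricSpace X] (T : X → X) : Prop :=
  ∃ δ : ℝ, 0 < δ ∧ ∀ (k : ℕ) (U : Fin (k + 1) → Set X), (∀ i, Opene (U i)) →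
    (⋂ i, STset T (U i) δ).Nonempty

/-- Thickly syndetically transitive system. -/
def ThicklySyndeticallyTransitive [TopologicalSpace X] (T : X → X) : Prop :=
  ∀ U V : Set X, Opene U → Opene V → ThicklySyndeticSet (NTset T U V)

/-- A proximal pair: `liminf d(Tⁿx,Tⁿy) = 0`. -/
def ProximalPair [MetricSpace X] (T : X → X) (x y : X) : Prop :=
  liminf (fun n : ℕ => dist (T^[n] x) (T^[n] y)) atTop = 0

/-- A proximal system: every pair of points is proximal. -/
def ProximalSystem [MetricSpace X] (T : X → X) : Prop :=
  ∀ x y : X, ProximalPair T x y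

/-- The proximal cell of `x`. -/
def ProxCell [MetricSpace X] (T : X → X) (x : X) : Set X :=
  {y | ProximalPair T x y}

/-- Li-Yorke sensitivity. -/
def LiYorkeSensitive [MetricSpace X] (T : X → X) : Prop :=
  ∃ δ : ℝ, 0 < δ ∧ ∀ x : X, ∀ U ∈ 𝓝 x, ∃ y ∈ U,
    liminf (fun n : ℕ => dist (T^[n] x) (T^[n] y)) atTop = 0 ∧
    δ < limsup (fun n : ℕ => dist (T^[n] x) (T^[n] y)) atTop

/-- Spatio-temporally chaotic system. -/
def SpatioTemporallyChaotic [MetricSpace X] (T : X → X) : Prop :=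
  ∀ x : X, ∀ U ∈ 𝓝 x, ∃ y ∈ U,
    liminf (fun n : ℕ => dist (T^[n] x) (T^[n] y)) atTop = 0 ∧
    0 < limsup (fun n : ℕ => dist (T^[n] x) (T^[n] y)) atTop

/-- A distal point: not proximal to any other point of its orbit closure. -/
def IsDistalPoint [MetricSpace X] (T : X → X) (x : X) : Prop :=
  ∀ y ∈ closure (Set.range fun n : ℕ => T^[n] x), y ≠ x →
    0 < liminf (fun n : ℕ => dist (T^[n] x) (T^[n] y)) atTop

/-- The Lyapunov number `𝕃_r`. -/
noncomputable def LyapR [MetricSpace X] (T : X → X) : ℝ :=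
  sSup {δ : ℝ | 0 < δ ∧ ∀ x : X, ∀ U : Set X, IsOpen U → x ∈ U →
    ∃ y ∈ U, ∃ n : ℕ, δ < dist (T^[n] x) (T^[n] y)}

/-- The Lyapunov number `𝕃̄_r`. -/
noncomputable def LyapRbar [MetricSpace X] (T : X → X) : ℝ :=
  sSup {δ : ℝ | 0 < δ ∧ ∀ x : X, ∀ U : Set X, IsOpen U → x ∈ U →
    ∃ y ∈ U, δ < limsup (fun n : ℕ => dist (T^[n] x) (T^[n] y)) atTop}

/-- `min_{1≤i≤k} d(Tⁿ xᵢ, Tⁿ yᵢ)`. -/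
noncomputable def minDist [MetricSpace X] (T : X → X) {k : ℕ}
    (x y : Fin (k + 1) → X) (n : ℕ) : ℝ :=
  Finset.univ.inf' Finset.univ_nonempty (fun i => dist (T^[n] (x i)) (T^[n] (y i)))

/-- The Lyapunov number `𝕃_{m,r}`. -/
noncomputable def LyapMR [MetricSpace X] (T : X → X) : ℝ :=
  sSup {δ : ℝ | 0 < δ ∧ ∀ (k : ℕ) (x : Fin (k + 1) → X) (U : Fin (k + 1) → Set X),
    (∀ i, IsOpen (U i) ∧ x i ∈ U i) →
    ∃ y : Fin (k + 1) → X, (∀ i, y i ∈ U i) ∧ ∃ n : ℕ, δ < minDist T x y n}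

/-- The Lyapunov number `𝕃̄_{m,r}`. -/
noncomputable def LyapMRbar [MetricSpace X] (T : X → X) : ℝ :=
  sSup {δ : ℝ | 0 < δ ∧ ∀ (k : ℕ) (x : Fin (k + 1) → X) (U : Fin (k + 1) → Set X),
    (∀ i, IsOpen (U i) ∧ x i ∈ U i) →
    ∃ y : Fin (k + 1) → X, (∀ i, y i ∈ U i) ∧
      δ < limsup (fun n : ℕ => minDist T x y n) atTop}

/-- The Lyapunov number `𝕃_{m,d}`. -/
noncomputable def LyapMD [MetricSpace X] (T : X → X) : ℝ :=
  sSup {δ : ℝ | 0 < δ ∧ ∀ (k : ℕ) (U : Fin (k + 1) → Set X), (∀ i, Opene (U i)) →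
    ∃ x y : Fin (k + 1) → X, (∀ i, x i ∈ U i ∧ y i ∈ U i) ∧ ∃ n : ℕ, δ < minDist T x y n}

/-- The Lyapunov number `𝕃̄_{m,d}`. -/
noncomputable def LyapMDbar [MetricSpace X] (T : X → X) : ℝ :=
  sSup {δ : ℝ | 0 < δ ∧ ∀ (k : ℕ) (U : Fin (k + 1) → Set X), (∀ i, Opene (U i)) →
    ∃ x y : Fin (k + 1) → X, (∀ i, x i ∈ U i ∧ y i ∈ U i) ∧
      δ < limsup (fun n : ℕ => minDist T x y n) atTop}

/-- `(k,T,ε)`-separated set with respect to the sequence `ns` (with `ns 0 = 0` by convention). -/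
def IsSepSet [MetricSpace X] (T : X → X) (ns : ℕ → ℕ) (k : ℕ) (ε : ℝ) (E : Set X) : Prop :=
  ∀ x ∈ E, ∀ y ∈ E, x ≠ y → ∃ j < k, ε < dist (T^[ns j] x) (T^[ns j] y)

/-- `sep(k,T,ε)`: maximal cardinality of a `(k,T,ε)`-separated set. -/
noncomputable def sepNum [MetricSpace X] (T : X → X) (ns : ℕ → ℕ) (k : ℕ) (ε : ℝ) : ℕ :=
  sSup {r : ℕ | ∃ E : Finset X, IsSepSet T ns k ε ↑E ∧ E.card = r}

/-- Topological sequence entropy along `ns`: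
`h_N(T) = lim_{ε→0} limsup_{k→∞} (1/k) log sep(k,T,ε)` (the limit as `ε → 0⁺` of the
nonincreasing-in-`ε` quantity, i.e. the supremum over `ε > 0`). -/
noncomputable def seqEntropy [MetricSpace X] (T : X → X) (ns : ℕ → ℕ) : EReal :=
  ⨆ (ε : ℝ) (_ : 0 < ε),
    limsup (fun k : ℕ => ((Real.log (sepNum T ns k ε) / k : ℝ) : EReal)) atTop

end Defs

/-!
Take `δ = d(a, b) / 8` for distinct `a, b`. Fix `x`, a point `z ∈ ω_{N_T}(x)`, and `w` with
`d(z, w) ≥ 4δ`. Since `X` has no isolated points, the times `n` with `Tⁿx ∈ G` and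
`U ∩ T⁻ⁿV ≠ ∅` (`G` a neighbourhood of `z`, `U, V` opene) are unbounded, so the points `y` with
`Tⁿx ∈ G` and `Tⁿy ∈ V` for infinitely many `n` form a residual set. Small balls around `z` as `G`
and `V` make `y` proximal to `x`; balls of radius `δ` around `z` and `w` give
`d(Tⁿx, Tⁿy) > 2δ` infinitely often. By the Baire category theorem, the intersection of these
countably many residual sets meets every neighbourhood of `x`.
-/

section Residual

variable {X : Type*} [TopologicalSpace X]

theorem setOf_frequently_mem_residual {s : ℕ → Set X} (hs : ∀ n, IsOpen (s n))
    (hd : ∀ N, Dense (⋃ n ≥ N, s n)) :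
    {y | ∃ᶠ n in atTop, y ∈ s n} ∈ residual X := by
  have h : {y | ∃ᶠ n in atTop, y ∈ s n} = ⋂ N, ⋃ n ≥ N, s n := by
    ext y
    simp [frequently_atTop]
  rw [h]
  exact countable_iInter_mem.2 fun N =>
    residual_of_dense_open (isOpen_biUnion fun n _ => hs n) (hd N)

variable [T3Space X] (hperf : ∀ x : X, (𝓝[≠] x).NeBot) {T : X → X} (hTc : Continuous T)
  {x z : X} (hz : z ∈ omegaNT T x) {G V : Set X} (hG : IsOpen G) (hzG : z ∈ G) (hV : Opene V)
include hperf hTc hz hG hzG hV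

theorem dense_biUnion_iterate_mem_of_mem_omegaNT (N : ℕ) :
    Dense (⋃ n ≥ N, {y | T^[n] x ∈ G ∧ T^[n] y ∈ V}) := by
  refine dense_iff_inter_open.2 fun U hU ⟨u, hu⟩ => ?_
  obtain ⟨v, hv⟩ := hV.2
  have : (𝓝[≠] v).NeBot := hperf v
  have hS : ((fun j => T^[j] u) '' Iio N).Finite := (finite_Iio N).image _
  obtain ⟨w, hwV, hw⟩ :=
    (infinite_of_mem_nhds v (hV.1.mem_nhds hv)).exists_notMem_finite hS
  obtain ⟨t, ht, htc, htV⟩ := exists_mem_nhds_isClosed_subset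
    (inter_mem (hV.1.mem_nhds hwV) (hS.isClosed.compl_mem_nhds hw))
  -- Orbits from `U'` stay out of `t ∋ w` before time `N`, so `hz` must yield a time `≥ N`.
  set U' := U ∩ ⋂ j ∈ Iio N, T^[j] ⁻¹' tᶜ
  have hU' : Opene U' := ⟨hU.inter ((finite_Iio N).isOpen_biInter fun j _ =>
      htc.isOpen_compl.preimage (hTc.iterate j)),
    u, hu, mem_iInter₂.2 fun j hj h => (htV h).2 (mem_image_of_mem _ hj)⟩
  obtain ⟨n, hnx, q, ⟨hqU, hqt⟩, hqV⟩ :=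
    hz G hG hzG U' (interior t) hU' ⟨isOpen_interior, w, mem_interior_iff_mem_nhds.2 ht⟩
  have hNn : N ≤ n := not_lt.1 fun hn => mem_iInter₂.1 hqt n hn (interior_subset hqV)
  exact ⟨q, hqU, mem_biUnion hNn ⟨hnx, (htV (interior_subset hqV)).1⟩⟩

theorem setOf_frequently_iterate_mem_mem_residual :
    {y | ∃ᶠ n in atTop, T^[n] x ∈ G ∧ T^[n] y ∈ V} ∈ residual X :=
  setOf_frequently_mem_residual
    (fun n => (isOpen_const (p := T^[n] x ∈ G)).inter (hV.1.preimage (hTc.iterate n)))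
    (dense_biUnion_iterate_mem_of_mem_omegaNT hperf hTc hz hG hzG hV)

end Residual

theorem liminf_eq_zero_of_frequently_lt {ι : Type*} {f : Filter ι} [f.NeBot] {u : ι → ℝ}
    (h0 : ∀ i, 0 ≤ u i) (hbdd : IsBoundedUnder (· ≤ ·) f u)
    (h : ∀ ε > 0, ∃ᶠ i in f, u i < ε) : liminf u f = 0 :=
  le_antisymm
    (le_of_forall_pos_le_add fun ε hε => by
      simpa using liminf_le_of_frequently_le ((h ε hε).mono fun _ => le_of_lt)
        (isBoundedUnder_of ⟨0, h0⟩))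
    (le_liminf_of_le hbdd.isCoboundedUnder_ge (Eventually.of_forall h0))

theorem exists_half_dist_le_dist {X : Type*} [PseudoMetricSpace X] (a b z : X) :
    ∃ w, dist a b / 2 ≤ dist z w := by
  by_contra! h
  linarith [dist_triangle_left a b z, h a, h b]

section Metric

variable {X : Type*} [MetricSpace X] (hperf : ∀ x : X, (𝓝[≠] x).NeBot) {T : X → X}
  (hTc : Continuous T) {x z : X} (hz : z ∈ omegaNT T x)
include hperf hTc hz

theorem setOf_frequently_dist_iterate_lt_mem_residual {ε : ℝ} (hε : 0 < ε) :
    {y | ∃ᶠ n in atTop, dist (T^[n] x) (T^[n] y) < ε} ∈ residual X := by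
  have hε2 : 0 < ε / 2 := half_pos hε
  refine mem_of_superset (setOf_frequently_iterate_mem_mem_residual hperf hTc hz isOpen_ball
    (mem_ball_self hε2) ⟨isOpen_ball, z, mem_ball_self hε2⟩) fun y hy => hy.mono ?_
  rintro n ⟨hx, hy⟩
  rw [mem_ball] at hx hy
  linarith [dist_triangle_right (T^[n] x) (T^[n] y) z]

theorem setOf_frequently_lt_dist_iterate_mem_residual (w : X) {r : ℝ} (hr : 0 < r) :
    {y | ∃ᶠ n in atTop, dist z w - 2 * r < dist (T^[n] x) (T^[n] y)} ∈ residual X := by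
  refine mem_of_superset (setOf_frequently_iterate_mem_mem_residual hperf hTc hz isOpen_ball
    (mem_ball_self hr) ⟨isOpen_ball, w, mem_ball_self hr⟩) fun y hy => hy.mono ?_
  rintro n ⟨hx, hy⟩
  rw [mem_ball] at hx hy
  linarith [dist_triangle4 z (T^[n] x) (T^[n] y) w, dist_comm z (T^[n] x)]

end Metric

theorem stmt0_general {X : Type*} [MetricSpace X] [CompactSpace X] [Nontrivial X]
    (hperf : ∀ x : X, (𝓝[≠] x).NeBot)
    {T : X → X} (hTc : Continuous T)
    (htc : TransCompact T) :
    LiYorkeSensitive T := by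
  obtain ⟨a, b, hab⟩ := exists_pair_ne X
  have hD : 0 < dist a b := dist_pos.2 hab
  refine ⟨dist a b / 8, by positivity, fun x U hU => ?_⟩
  obtain ⟨z, hz⟩ := htc x
  obtain ⟨w, hw⟩ := exists_half_dist_le_dist a b z
  have hnear := countable_iInter_mem.2 fun k : ℕ =>
    setOf_frequently_dist_iterate_lt_mem_residual hperf hTc hz (Nat.one_div_pos_of_nat (n := k))
  have hfar := setOf_frequently_lt_dist_iterate_mem_residual hperf hTc hz w
    (by positivity : 0 < dist a b / 8)
  obtain ⟨y, ⟨hy_near, hy_far⟩, hyU⟩ :=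
    (dense_of_mem_residual (inter_mem hnear hfar)).inter_nhds_nonempty hU
  have hbdd : IsBoundedUnder (· ≤ ·) atTop fun n => dist (T^[n] x) (T^[n] y) :=
    isBoundedUnder_of ⟨_, fun n => dist_le_diam_of_mem isCompact_univ.isBounded trivial trivial⟩
  refine ⟨y, hyU, liminf_eq_zero_of_frequently_lt (fun _ => dist_nonneg) hbdd fun ε hε => ?_, ?_⟩
  · obtain ⟨k, hk⟩ := exists_nat_one_div_lt hε
    exact (mem_iInter.1 hy_near k).mono fun n hn => hn.trans hk
  · refine lt_of_lt_of_le ?_ (le_limsup_of_frequently_le (hy_far.mono fun n => le_of_lt) hbdd)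
    linarith

/-- Every transitive compact dynamical system is Li-Yorke sensitive. -/
theorem stmt0 {X : Type*} [MetricSpace X] [CompactSpace X] [Nontrivial X]
    (hperf : ∀ x : X, (𝓝[≠] x).NeBot)
    {T : X → X} (hTc : Continuous T) (hTs : Function.Surjective T)
    (htc : TransCompact T) :
    LiYorkeSensitive T :=
  stmt0_general hperf hTc htc
end

section
/- For an M-system (X,T), the following three properties are equivalent: (X,T) is thickly syndetically sensitive; (X,T) is multi-sensitive; (X,T) is thickly sensitive. -/
open Filter Topology Set Metric

namespace SyndeticSet

theorem of_add_mem {S S' : Set ℕ} (hS : SyndeticSet S) (a : ℕ) (h : ∀ n ∈ S, n + a ∈ S') :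
    SyndeticSet S' := by
  obtain ⟨K, hK⟩ := hS
  refine ⟨K + a, fun i => ?_⟩
  obtain ⟨j, hjK, hj⟩ := hK i
  exact ⟨j + a, by omega, by simpa only [← Nat.add_assoc] using h _ hj⟩

theorem mono {S S' : Set ℕ} (hS : SyndeticSet S) (h : S ⊆ S') : SyndeticSet S' :=
  hS.of_add_mem 0 fun _ hn => h hn

end SyndeticSet

theorem ThicklySyndeticSet.thickSet {S : Set ℕ} (hS : ThicklySyndeticSet S) : ThickSet S := by
  intro N
  obtain ⟨K, hK⟩ := hS N
  obtain ⟨j, -, hj⟩ := hK 0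
  exact ⟨0 + j, hj⟩

section Dynamics

variable {X : Type*} {T : X → X}

theorem Opene.preimage [TopologicalSpace X] {Y : Type*} [TopologicalSpace Y] {U : Set Y}
    (hU : Opene U) {f : X → Y} (hf : Continuous f) (hfs : Function.Surjective f) :
    Opene (f ⁻¹' U) :=
  ⟨hU.1.preimage hf, hU.2.preimage hfs⟩

theorem STset_mono [MetricSpace X] {U V : Set X} (h : U ⊆ V) (δ : ℝ) :
    STset T U δ ⊆ STset T V δ := fun _ ⟨x, hx, y, hy, hxy⟩ => ⟨x, h hx, y, h hy, hxy⟩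

theorem mem_STset_of_mapsTo [MetricSpace X] {O V : Set X} {t m : ℕ} {δ : ℝ}
    (hOV : MapsTo T^[t] O V) (hm : m + t ∈ STset T O δ) : m ∈ STset T V δ := by
  obtain ⟨x, hx, y, hy, hxy⟩ := hm
  rw [Function.iterate_add_apply, Function.iterate_add_apply] at hxy
  exact ⟨_, hOV hx, _, hOV hy, hxy⟩

theorem notMem_STset_preimage_ball [MetricSpace X] (n : ℕ) (c : X) (δ : ℝ) :
    n ∉ STset T (T^[n] ⁻¹' ball c (δ / 2)) δ := by
  rintro ⟨x, hx, y, hy, hxy⟩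
  have := dist_triangle_right (T^[n] x) (T^[n] y) c
  linarith [mem_ball.1 hx, mem_ball.1 hy]

theorem TopTransitive.exists_opene_subset_mapsTo [TopologicalSpace X] (hTc : Continuous T)
    (hT : TopTransitive T) {ι : Type*} (s : Finset ι) {V : ι → Set X}
    (hV : ∀ i ∈ s, Opene (V i)) {U : Set X} (hU : Opene U) :
    ∃ O ⊆ U, Opene O ∧ ∃ t : ι → ℕ, ∀ i ∈ s, MapsTo T^[t i] O (V i) := by
  classical
  induction s using Finset.induction_on with
  | empty => exact ⟨U, subset_rfl, hU, 0, fun i hi => absurd hi (Finset.notMem_empty i)⟩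
  | insert a s has ih =>
    obtain ⟨O, hOU, hO, t, ht⟩ := ih fun i hi => hV i (Finset.mem_insert_of_mem hi)
    have hVa := hV a (Finset.mem_insert_self a s)
    obtain ⟨n, hn⟩ := hT O (V a) hO hVa
    refine ⟨O ∩ T^[n] ⁻¹' V a, inter_subset_left.trans hOU,
      ⟨hO.1.inter (hVa.1.preimage (hTc.iterate n)), hn⟩, Function.update t a n, fun i hi => ?_⟩
    rcases eq_or_ne i a with rfl | hia
    · rw [Function.update_self]
      exact fun _ hx => hx.2
    · rw [Function.update_of_ne hia]
      exact (ht i ((Finset.mem_insert.1 hi).resolve_left hia)).mono_left inter_subset_left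

section Minimal

variable [TopologicalSpace X] [CompactSpace X] [T2Space X]

theorem exists_subset_isClosed_image_eq (hTc : Continuous T) {C : Set X} (hne : C.Nonempty)
    (hC : IsClosed C) (hTC : MapsTo T C C) :
    ∃ M ⊆ C, M.Nonempty ∧ IsClosed M ∧ T '' M = M := by
  let S : Set (Set X) := {K | K.Nonempty ∧ IsClosed K ∧ MapsTo T K K}
  have hchain : ∀ c ⊆ S, IsChain (· ⊆ ·) c → c.Nonempty → ∃ lb ∈ S, ∀ K ∈ c, lb ⊆ K := by
    intro c hcS hc hcne
    have : Nonempty c := hcne.to_subtype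
    have hdir : DirectedOn (· ⊇ ·) c := fun K hK L hL =>
      (hc.total hK hL).elim (fun h => ⟨K, hK, subset_rfl, h⟩) fun h => ⟨L, hL, h, subset_rfl⟩
    have hne : (⋂₀ c).Nonempty :=
      IsCompact.nonempty_sInter_of_directed_nonempty_isCompact_isClosed hdir
        (fun K hK => (hcS hK).1) (fun K hK => (hcS hK).2.1.isCompact) fun K hK => (hcS hK).2.1
    refine ⟨⋂₀ c, ⟨hne, isClosed_sInter fun K hK => (hcS hK).2.1, fun x hx => ?_⟩,
      fun K hK => sInter_subset_of_mem hK⟩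
    exact mem_sInter.2 fun K hK => (hcS hK).2.2 (mem_sInter.1 hx K hK)
  obtain ⟨M, hMC, hMmin⟩ := zorn_superset_nonempty S hchain C ⟨hne, hC, hTC⟩
  obtain ⟨hMne, hMcl, hMT⟩ := hMmin.prop
  have hTM : T '' M ∈ S :=
    ⟨hMne.image T, (hMcl.isCompact.image hTc).isClosed,
      (mapsTo_image T M).mono_left hMT.image_subset⟩
  exact ⟨M, hMC, hMne, hMcl, hMmin.eq_of_subset hTM hMT.image_subset⟩

theorem IsMinimalSubset.subset_closure_orbit (hTc : Continuous T) {M : Set X}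
    (hM : IsMinimalSubset T M) {x : X} (hx : x ∈ M) :
    M ⊆ closure (range fun n => T^[n] x) := by
  obtain ⟨-, hMcl, hTM, hmin⟩ := hM
  set C := closure (range fun n => T^[n] x)
  have hCM : C ⊆ M := closure_minimal (range_subset_iff.2 fun n =>
    (mapsTo_iff_image_subset.2 hTM.subset).iterate n hx) hMcl
  have hTC : MapsTo T C C := by
    refine MapsTo.closure (fun _ ⟨n, hn⟩ => ⟨n + 1, ?_⟩) hTc
    rw [← hn]
    exact Function.iterate_succ_apply' T n x
  obtain ⟨M', hM'C, hM'ne, hM'cl, hTM'⟩ :=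
    exists_subset_isClosed_image_eq (C := C) hTc ⟨x, subset_closure ⟨0, rfl⟩⟩ isClosed_closure
      hTC
  exact hmin M' (hM'C.trans hCM) hM'ne hM'cl hTM' ▸ hM'C

theorem IsMinimalPoint.syndeticSet_NTpt (hTc : Continuous T) {q : X} (hq : IsMinimalPoint T q)
    {G : Set X} (hG : IsOpen G) (hqG : q ∈ G) : SyndeticSet (NTpt T q G) := by
  obtain ⟨M, hM, hqM⟩ := hq
  have hcov : M ⊆ ⋃ n : ℕ, T^[n] ⁻¹' G := fun x hx => by
    obtain ⟨_, hyG, n, rfl⟩ :=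
      _root_.mem_closure_iff.1 (hM.subset_closure_orbit hTc hx hqM) G hG hqG
    exact mem_iUnion.2 ⟨n, hyG⟩
  obtain ⟨t, ht⟩ := hM.2.1.isCompact.elim_finite_subcover _
    (fun n => hG.preimage (hTc.iterate n)) hcov
  refine ⟨t.sup id, fun i => ?_⟩
  have hTiq : T^[i] q ∈ M := (mapsTo_iff_image_subset.2 hM.2.2.1.subset).iterate i hqM
  obtain ⟨n, hn, hnG⟩ := mem_iUnion₂.1 (ht hTiq)
  refine ⟨n, Finset.le_sup (f := id) hn, ?_⟩
  show T^[i + n] q ∈ G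
  rw [Nat.add_comm, Function.iterate_add_apply]
  exact hnG

end Minimal

/-- The simultaneous returns contain the return times of a minimal point to an opene set that
some iterates of `T` send into every `V i`. -/
theorem MSystem.syndeticSet_iInter_NTset_self [TopologicalSpace X] [CompactSpace X] [T2Space X]
    [Nonempty X] (hTc : Continuous T) (hM : MSystem T) {ι : Type*} [Fintype ι]
    {V : ι → Set X} (hV : ∀ i, Opene (V i)) : SyndeticSet (⋂ i, NTset T (V i) (V i)) := by
  obtain ⟨O, -, hO, t, ht⟩ := hM.1.exists_opene_subset_mapsTo hTc Finset.univ
    (fun i _ => hV i) ⟨isOpen_univ, univ_nonempty⟩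
  obtain ⟨q, hq, hqO⟩ := hM.2.exists_mem_open hO.1 hO.2
  refine (hq.syndeticSet_NTpt hTc hO.1 hqO).mono fun n hn => mem_iInter.2 fun i => ?_
  have hti := ht i (Finset.mem_univ i)
  refine ⟨T^[t i] q, hti hqO, ?_⟩
  rw [mem_preimage, ← Function.Commute.iterate_iterate_self]
  exact hti hn

variable [MetricSpace X]

theorem ThicklySyndeticallySensitive.thicklySensitive (h : ThicklySyndeticallySensitive T) :
    ThicklySensitive T :=
  let ⟨δ, hδ, hsens⟩ := h
  ⟨δ, hδ, fun U hU => (hsens U hU).thickSet⟩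

theorem ThicklySensitive.multiSensitive (hTc : Continuous T) (hT : TopTransitive T)
    (h : ThicklySensitive T) : MultiSensitive T := by
  obtain ⟨δ, hδ, hsens⟩ := h
  refine ⟨δ, hδ, fun k U hU => ?_⟩
  obtain ⟨O, -, hO, t, ht⟩ :=
    hT.exists_opene_subset_mapsTo hTc Finset.univ (fun i _ => hU i) (hU 0)
  obtain ⟨m, hm⟩ := hsens O hO (Finset.univ.sup t)
  exact ⟨m, mem_iInter.2 fun i => mem_STset_of_mapsTo (ht i (Finset.mem_univ i))
    (hm _ (Finset.le_sup (Finset.mem_univ i)))⟩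

/-- Adding to the `N + 1` sets `T⁻ⁱ U` a set on which the first `N + 1` iterates are `δ`-close
forces the common separation time `n` past `N`; then `n - N, …, n` all separate points of `U`. -/
theorem MultiSensitive.thicklySensitive (hTc : Continuous T) (hTs : Function.Surjective T)
    (h : MultiSensitive T) : ThicklySensitive T := by
  obtain ⟨δ, hδ, hms⟩ := h
  refine ⟨δ, hδ, fun U hU N => ?_⟩
  obtain ⟨x₀, hx₀⟩ := hU.2
  let B : Set X := ⋂ j : Fin (N + 1), T^[j] ⁻¹' ball (T^[j] x₀) (δ / 2)
  have hB : Opene B := ⟨isOpen_iInter_of_finite fun j => isOpen_ball.preimage (hTc.iterate _),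
    x₀, mem_iInter.2 fun j => mem_ball_self (half_pos hδ)⟩
  let W : Fin (N + 2) → Set X := Fin.cons B fun i => T^[i] ⁻¹' U
  have hW : ∀ i, Opene (W i) :=
    Fin.cases hB fun i => hU.preimage (hTc.iterate _) (hTs.iterate _)
  obtain ⟨n, hn⟩ := hms (N + 1) W hW
  have hNn : N < n := by
    by_contra! hnN
    exact notMem_STset_preimage_ball n _ δ
      (STset_mono (iInter_subset _ ⟨n, by omega⟩) δ (mem_iInter.1 hn 0))
  refine ⟨n - N, fun i hi => mem_STset_of_mapsTo (t := N - i) (fun _ hx => hx) ?_⟩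
  rw [show n - N + i + (N - i) = n by omega]
  exact mem_iInter.1 hn (Fin.succ ⟨N - i, by omega⟩)

/-- The pairs separated at the times `m, …, m + N` of a thick run stay `δ / 2`-separated after
any simultaneous return of their `δ / 4`-neighbourhoods, and such returns are syndetic. -/
theorem ThicklySensitive.thicklySyndeticallySensitive [CompactSpace X] (hTc : Continuous T)
    (hM : MSystem T) (h : ThicklySensitive T) : ThicklySyndeticallySensitive T := by
  obtain ⟨δ, hδ, hsens⟩ := h
  refine ⟨δ / 2, half_pos hδ, fun U hU N => ?_⟩
  have : Nonempty X := hU.2.to_type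
  obtain ⟨m, hm⟩ := hsens U hU N
  choose! x hx y hy hxy using hm
  let w : Fin (N + 1) × Bool → X := fun p => cond p.2 (x p.1) (y p.1)
  let V : Fin (N + 1) × Bool → Set X := fun p =>
    U ∩ T^[m + p.1] ⁻¹' ball (T^[m + p.1] (w p)) (δ / 4)
  have hwU : ∀ p, w p ∈ U := fun ⟨j, b⟩ => by
    cases b
    exacts [hy j j.is_le, hx j j.is_le]
  have hV : ∀ p, Opene (V p) := fun p =>
    ⟨hU.1.inter (isOpen_ball.preimage (hTc.iterate _)), w p, hwU p,
      mem_ball_self (by positivity)⟩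
  refine (MSystem.syndeticSet_iInter_NTset_self hTc hM hV).of_add_mem m fun n hn i hi => ?_
  obtain ⟨u, ⟨huU, -⟩, -, hu⟩ := mem_iInter.1 hn (⟨i, by omega⟩, true)
  obtain ⟨v, ⟨hvU, -⟩, -, hv⟩ := mem_iInter.1 hn (⟨i, by omega⟩, false)
  refine ⟨u, huU, v, hvU, ?_⟩
  have hu' := mem_ball.1 hu
  have hv' := mem_ball.1 hv
  simp only [w, cond_true, cond_false, ← Function.iterate_add_apply] at hu' hv'
  have := dist_triangle4 (T^[m + i] (x i)) (T^[m + i + n] u) (T^[m + i + n] v) (T^[m + i] (y i))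
  rw [show n + m + i = m + i + n by omega]
  linarith [hxy i hi, dist_comm (T^[m + i] (x i)) (T^[m + i + n] u)]

end Dynamics

theorem stmt2_general {X : Type*} [MetricSpace X] [CompactSpace X]
    {T : X → X} (hTc : Continuous T) (hTs : Function.Surjective T)
    (hM : MSystem T) :
    (ThicklySyndeticallySensitive T ↔ MultiSensitive T) ∧
    (MultiSensitive T ↔ ThicklySensitive T) := by
  have ts_ms := ThicklySensitive.multiSensitive hTc hM.1
  have ms_ts := MultiSensitive.thicklySensitive hTc hTs
  have ts_tss := ThicklySensitive.thicklySyndeticallySensitive hTc hM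
  exact ⟨⟨fun h => ts_ms h.thicklySensitive, fun h => ts_tss (ms_ts h)⟩, ms_ts, ts_ms⟩

/-- For an M-system, thickly syndetical sensitivity, multi-sensitivity and
thick sensitivity are all equivalent. -/
theorem stmt2 {X : Type*} [MetricSpace X] [CompactSpace X] [Nontrivial X]
    (hperf : ∀ x : X, (𝓝[≠] x).NeBot)
    {T : X → X} (hTc : Continuous T) (hTs : Function.Surjective T)
    (hM : MSystem T) :
    (ThicklySyndeticallySensitive T ↔ MultiSensitive T) ∧
    (MultiSensitive T ↔ ThicklySensitive T) :=
  stmt2_general hTc hTs hM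
end

section
/- There exists a dynamical system (X,T) that is transitive compact but not totally transitive; moreover, there exists such a system that is additionally not proximal. -/
open Filter Topology Set Metric

/-!
The example is a subshift of `{0,1,2}^ℕ`. In its points all `1`s sit at positions of one parity,
and *events* (a `1`, or the last `2` of a run of `2`s) are sparse: at most `k + 2` of them in any
window of length `(k + 2) 2^k`. The parity rule keeps the square of the shift from being
transitive. Gluing two words with a long block `2⋯20⋯0` in between (which creates a single,
isolated event) shows that the shift carries any cylinder into any other at all large times of
the right parity. Sparse events force every orbit to contain arbitrarily long runs of `0`s or of
`2`s, so one of the fixed points `0^∞`, `2^∞` lies in its ω-limit set; an orbit that stays near a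
fixed point for two consecutive times meets both parities, which gives transitive compactness.
The two fixed points form a non-proximal pair.
-/

section FixedPoints

variable {X : Type*}

lemma exists_mul_mem_Ico {k : ℕ} (hk : 0 < k) (d : ℕ) : ∃ m, d ≤ k * m ∧ k * m < d + k := by
  refine ⟨(d + k - 1) / k, ?_, ?_⟩
  · have := Nat.div_add_mod (d + k - 1) k
    have := Nat.mod_lt (d + k - 1) hk
    omega
  · have := Nat.div_mul_le_self (d + k - 1) k
    rw [mul_comm]; omega

/-- The orbit of `x` enters the neighbourhood `⋂_{i<k} T⁻ⁱ G` of the fixed point `z` infinitely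
often, and each time stays in `G` for `k` consecutive steps, so it meets the progression. -/
theorem mem_omegaNT_of_isFixedPt [TopologicalSpace X] {T : X → X} (hT : Continuous T)
    {k : ℕ} (hk : 0 < k) (hAP : ∀ U V, Opene U → Opene V → ∃ a, ∀ m, a + k * m ∈ NTset T U V)
    {x z : X} (hz : Function.IsFixedPt T z) (hzx : z ∈ omegaT T x) : z ∈ omegaNT T x := by
  intro G hG hzG U V hU hV
  obtain ⟨a, ha⟩ := hAP U V hU hV
  have hG' : IsOpen (⋂ i ∈ Finset.range k, T^[i] ⁻¹' G) :=
    isOpen_biInter_finset fun i _ => hG.preimage (hT.iterate i)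
  have hzG' : z ∈ ⋂ i ∈ Finset.range k, T^[i] ⁻¹' G := by
    simp only [mem_iInter₂, mem_preimage, (hz.iterate _).eq]
    exact fun _ _ => hzG
  obtain ⟨n, hn, han⟩ := (hzx _ hG' hzG').exists_gt a
  obtain ⟨m, hm₁, hm₂⟩ := exists_mul_mem_Ico hk (n - a)
  refine ⟨a + k * m, ?_, ha m⟩
  have hstay := mem_iInter₂.1 hn (a + k * m - n) (Finset.mem_range.2 (by omega))
  rwa [mem_preimage, ← Function.iterate_add_apply, Nat.sub_add_cancel (by omega)] at hstay

theorem not_proximalSystem_of_isFixedPt [MetricSpace X] {T : X → X} {a b : X}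
    (ha : Function.IsFixedPt T a) (hb : Function.IsFixedPt T b) (hab : a ≠ b) :
    ¬ ProximalSystem T := by
  intro h
  have hpair := h a b
  simp only [ProximalPair, (ha.iterate _).eq, (hb.iterate _).eq, liminf_const] at hpair
  exact hab (dist_eq_zero.1 hpair)

end FixedPoints

namespace ParityShift

abbrev Seq := ℕ → Fin 3

noncomputable instance : MetricSpace Seq := PiNat.metricSpace

/-- Appending `2`s to a word or prepending `0`s creates no event. -/
def IsEvent (x : Seq) (i : ℕ) : Prop := x i = 1 ∨ (x i = 2 ∧ x (i + 1) ≠ 2)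

instance (x : Seq) : DecidablePred (IsEvent x) := fun i => by unfold IsEvent; infer_instance

def eventCount (x : Seq) (a b : ℕ) : ℕ := ((Finset.Ico a b).filter (IsEvent x)).card

def window (k : ℕ) : ℕ := (k + 2) * 2 ^ k

def OnesSameParity (x : Seq) : Prop := ∀ i j, x i = 1 → x j = 1 → i % 2 = j % 2

def EventsSparse (x : Seq) : Prop := ∀ a k, eventCount x a (a + window k) ≤ k + 2

def Admissible (x : Seq) : Prop := OnesSameParity x ∧ EventsSparse x

abbrev Space := {x : Seq // Admissible x}

lemma window_strictMono : StrictMono window := by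
  refine strictMono_nat_of_lt_succ fun k => ?_
  simp only [window, pow_succ]
  nlinarith [Nat.one_le_two_pow (n := k)]

lemma mul_le_window (k : ℕ) : (k + 3) * k ≤ window k := by
  have := Nat.lt_two_pow_self (n := k)
  unfold window
  nlinarith

section EventCount

variable {x y : Seq}

lemma eventCount_add {a b c : ℕ} (hab : a ≤ b) (hbc : b ≤ c) :
    eventCount x a b + eventCount x b c = eventCount x a c := by
  simp only [eventCount, ← Finset.Ico_union_Ico_eq_Ico hab hbc, Finset.filter_union]
  exact (Finset.card_union_of_disjoint
    (Finset.disjoint_filter_filter (Finset.Ico_disjoint_Ico_consecutive a b c))).symm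

lemma eventCount_mono {a b c : ℕ} (hbc : b ≤ c) : eventCount x a b ≤ eventCount x a c :=
  Finset.card_le_card (Finset.filter_subset_filter _ (Finset.Ico_subset_Ico_right hbc))

lemma one_le_eventCount {a b i : ℕ} (hai : a ≤ i) (hib : i < b) (hi : IsEvent x i) :
    1 ≤ eventCount x a b :=
  Finset.card_pos.2 ⟨i, Finset.mem_filter.2 ⟨Finset.mem_Ico.2 ⟨hai, hib⟩, hi⟩⟩

lemma eventCount_le_one {a b e : ℕ} (h : ∀ j, a ≤ j → j < b → IsEvent x j → j = e) :
    eventCount x a b ≤ 1 := by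
  refine Finset.card_le_one.2 fun i hi j hj => ?_
  simp only [Finset.mem_filter, Finset.mem_Ico] at hi hj
  rw [h i hi.1.1 hi.1.2 hi.2, h j hj.1.1 hj.1.2 hj.2]

lemma eventCount_le_of_isEvent_sub {a b t : ℕ}
    (h : ∀ j, a ≤ j → j < b → IsEvent x j → t ≤ j ∧ IsEvent y (j - t)) :
    eventCount x a b ≤ eventCount y (a - t) (b - t) := by
  refine Finset.card_le_card_of_injOn (· - t) (fun j hj => ?_) (fun j₁ hj₁ j₂ hj₂ hj => ?_)
  · simp only [Finset.coe_filter, Finset.mem_Ico, mem_ofPred_eq] at hj ⊢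
    have := h j hj.1.1 hj.1.2 hj.2
    exact ⟨⟨by omega, by omega⟩, this.2⟩
  · simp only [Finset.coe_filter, Finset.mem_Ico, mem_ofPred_eq] at hj₁ hj₂
    have := (h j₁ hj₁.1.1 hj₁.1.2 hj₁.2).1
    have := (h j₂ hj₂.1.1 hj₂.1.2 hj₂.2).1
    simp only at hj
    omega

lemma le_eventCount_of_forall_block {a Λ : ℕ} :
    ∀ s, (∀ t < s, ∃ i, a + t * Λ ≤ i ∧ i < a + (t + 1) * Λ ∧ IsEvent x i) →
      s ≤ eventCount x a (a + s * Λ)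
  | 0, _ => Nat.zero_le _
  | s + 1, h => by
    obtain ⟨i, hi₁, hi₂, hi⟩ := h s (by omega)
    have ih := le_eventCount_of_forall_block s fun t ht => h t (by omega)
    have hlast := one_le_eventCount hi₁ hi₂ hi
    have := eventCount_add (x := x) (Nat.le_add_right a (s * Λ))
      (show a + s * Λ ≤ a + (s + 1) * Λ by nlinarith)
    omega

end EventCount

lemma continuous_eventCount (a b : ℕ) : Continuous fun x : Seq => eventCount x a b := by
  simp only [eventCount, Finset.card_filter]
  refine continuous_finsetSum _ fun i _ => ?_
  have hpair : Continuous fun x : Seq => (x i, x (i + 1)) :=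
    (continuous_apply i).prodMk (continuous_apply (i + 1))
  exact (continuous_of_discreteTopology (f := fun p : Fin 3 × Fin 3 =>
    if p.1 = 1 ∨ (p.1 = 2 ∧ p.2 ≠ 2) then 1 else 0)).comp hpair

lemma isClosed_admissible : IsClosed {x : Seq | Admissible x} := by
  simp only [Admissible, OnesSameParity, EventsSparse, ofPred_and, ofPred_forall]
  refine (isClosed_iInter fun i => isClosed_iInter fun j => ?_).inter
    (isClosed_iInter fun a => isClosed_iInter fun k =>
      isClosed_le (continuous_eventCount _ _) continuous_const)
  have hpair : Continuous fun x : Seq => (x i, x j) :=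
    (continuous_apply i).prodMk (continuous_apply j)
  exact (isClosed_discrete {p : Fin 3 × Fin 3 | p.1 = 1 → p.2 = 1 → i % 2 = j % 2}).preimage hpair

instance : CompactSpace Space := isCompact_iff_compactSpace.1 isClosed_admissible.isCompact

lemma fin_three_cases (c : Fin 3) : c = 0 ∨ c = 1 ∨ c = 2 := by
  fin_cases c <;> simp

lemma eventCount_comp_succ (x : Seq) (a b : ℕ) :
    eventCount (fun i => x (i + 1)) a b = eventCount x (a + 1) (b + 1) := by
  simp only [eventCount, ← Finset.map_add_right_Ico, Finset.filter_map, Finset.card_map]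
  rfl

lemma admissible_comp_succ {x : Seq} (hx : Admissible x) : Admissible fun i => x (i + 1) := by
  refine ⟨fun i j hi hj => by have := hx.1 _ _ hi hj; omega, fun a k => ?_⟩
  rw [eventCount_comp_succ, Nat.add_right_comm]
  exact hx.2 _ _

def cons (c : Fin 3) (x : Seq) : Seq := fun i => if i = 0 then c else x (i - 1)

lemma admissible_cons {x : Seq} (hx : Admissible x) {c : Fin 3} (hc : c ≠ 1)
    (hc₂ : c = 2 → x 0 = 2) : Admissible (cons c x) := by
  have hev : ∀ j, IsEvent (cons c x) j → 1 ≤ j ∧ IsEvent x (j - 1) := by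
    rintro (_ | j) hj
    · simp only [IsEvent, cons] at hj
      exact absurd hj (by simpa using ⟨hc, fun h => by simpa [cons] using hc₂ h⟩)
    · exact ⟨by omega, by simpa [IsEvent, cons] using hj⟩
  refine ⟨fun i j hi hj => ?_, fun a k => ?_⟩
  · rcases i with _ | i <;> rcases j with _ | j <;> simp only [cons] at hi hj <;> simp_all
    have := hx.1 i j hi hj
    omega
  · exact (eventCount_le_of_isEvent_sub fun j _ _ hj => hev j hj).trans
      ((eventCount_mono (by omega)).trans (hx.2 (a - 1) k))


def shift (x : Space) : Space := ⟨fun i => x.1 (i + 1), admissible_comp_succ x.2⟩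

lemma continuous_shift : Continuous shift :=
  have : Continuous fun x : Seq => fun i => x (i + 1) := continuous_pi fun _ => continuous_apply _
  (this.comp continuous_subtype_val).subtype_mk _

lemma iterate_shift_apply (n : ℕ) (x : Space) (i : ℕ) : (shift^[n] x).1 i = x.1 (i + n) := by
  induction n generalizing x with
  | zero => rfl
  | succ n ih => rw [Function.iterate_succ_apply, ih]; rfl

lemma shift_surjective : Function.Surjective shift := by
  intro x
  by_cases h : x.1 0 = 2
  · exact ⟨⟨cons 2 x.1, admissible_cons x.2 (by decide) fun _ => h⟩, rfl⟩
  · exact ⟨⟨cons 0 x.1, admissible_cons x.2 (by decide) (by simp)⟩, rfl⟩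

lemma exists_cylinder_subset {U : Set Space} (hU : IsOpen U) {p : Space} (hp : p ∈ U) :
    ∃ N, ∀ y : Space, (∀ i < N, y.1 i = p.1 i) → y ∈ U := by
  obtain ⟨ε, hε, hball⟩ := Metric.isOpen_iff.1 hU p hp
  obtain ⟨N, hN⟩ := exists_pow_lt_of_lt_one hε one_half_lt_one
  exact ⟨N, fun y hy => hball
    ((PiNat.mem_cylinder_iff_dist_le.1 (PiNat.mem_cylinder_iff.2 hy)).trans_lt hN)⟩

lemma dist_le_of_forall_lt_eq {x y : Space} {N : ℕ} (h : ∀ i < N, y.1 i = x.1 i) :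
    dist y x ≤ (1 / 2 : ℝ) ^ N :=
  PiNat.mem_cylinder_iff_dist_le.1 (PiNat.mem_cylinder_iff.2 h)

lemma admissible_of_isEvent_eq {x : Seq} (hx : OnesSameParity x) {e : ℕ}
    (he : ∀ j, IsEvent x j → j = e) : Admissible x :=
  ⟨hx, fun _ _ => (eventCount_le_one fun j _ _ hj => he j hj).trans (by omega)⟩

def const (c : Fin 3) (hc : c ≠ 1) : Space :=
  ⟨fun _ => c, admissible_of_isEvent_eq (fun _ _ h => absurd h hc) (e := 0)
    fun _ hj => by simp [IsEvent, hc] at hj⟩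

lemma isFixedPt_const (c : Fin 3) (hc : c ≠ 1) : Function.IsFixedPt shift (const c hc) := rfl

def singleOne (i : ℕ) : Space :=
  ⟨Pi.single i 1, admissible_of_isEvent_eq
    (fun j j' hj hj' => by simp [Pi.single_apply] at hj hj'; omega) (e := i)
    fun j hj => by by_contra hne; rcases hj with hj | ⟨hj, -⟩ <;> simp [hne] at hj⟩

def glue (p q : Seq) (L n D : ℕ) : Seq := fun j =>
  if j < L then p j
  else if j < L + D then 2
  else if j < n then 0
  else if j < n + L then q (j - n)
  else 2

section Glue

variable {p q : Seq} {L n D : ℕ}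

lemma glue_eq_one {j : ℕ} (h : glue p q L n D j = 1) :
    (j < L ∧ p j = 1) ∨ (n ≤ j ∧ j < n + L ∧ q (j - n) = 1) := by
  unfold glue at h
  split_ifs at h <;> first | simp at h | omega

lemma isEvent_glue {j : ℕ} (h : IsEvent (glue p q L n D) j) :
    (j < L ∧ IsEvent p j) ∨ j = L + D - 1 ∨ (n ≤ j ∧ j < n + L ∧ IsEvent q (j - n)) := by
  unfold IsEvent glue at h
  simp only [IsEvent]
  split_ifs at h <;> first
    | omega | (simp_all; done) | (rw [show j + 1 - n = j - n + 1 by omega] at h; simp_all)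

lemma eventCount_glue_le (a b : ℕ) :
    eventCount (glue p q L n D) a b ≤ 2 * L + 1 := by
  have hsub : (Finset.Ico a b).filter (IsEvent (glue p q L n D)) ⊆
      Finset.range L ∪ {L + D - 1} ∪ Finset.Ico n (n + L) := by
    intro j hj
    simp only [Finset.mem_filter, Finset.mem_union, Finset.mem_range, Finset.mem_singleton,
      Finset.mem_Ico] at hj ⊢
    rcases isEvent_glue hj.2 with h | h | h <;> omega
  refine (Finset.card_le_card hsub).trans ((Finset.card_union_le _ _).trans ?_)
  have := Finset.card_union_le (Finset.range L) {L + D - 1}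
  simp only [Finset.card_range, Finset.card_singleton, Nat.card_Ico] at this ⊢
  omega

lemma eventsSparse_glue (hp : EventsSparse p) (hq : EventsSparse q) (hL : 1 ≤ L)
    (hn : L + 2 * window (2 * L) ≤ n) : EventsSparse (glue p q L n (window (2 * L))) := by
  set D := window (2 * L)
  intro a k
  rcases le_or_gt (2 * L) k with hk | hk
  · exact (eventCount_glue_le _ _).trans (by omega)
  -- a window of length `window k < D` meets at most one of the three blocks of events
  have hW : window k < D := window_strictMono hk
  by_cases hP : a < L
  · refine (eventCount_le_of_isEvent_sub (t := 0) fun j _ hj₂ hj => ?_).trans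
      (by simpa using hp a k)
    rcases isEvent_glue hj with h | h | h
    · exact ⟨j.zero_le, h.2⟩
    all_goals omega
  by_cases hQ : n < a + window k
  · refine (eventCount_le_of_isEvent_sub (t := n) fun j hj₁ _ hj => ?_).trans
      ((eventCount_mono (by omega)).trans (hq (a - n) k))
    rcases isEvent_glue hj with h | h | h
    · omega
    · omega
    · exact ⟨h.1, h.2.2⟩
  · refine (eventCount_le_one (e := L + D - 1) fun j hj₁ hj₂ hj => ?_).trans (by omega)
    rcases isEvent_glue hj with h | h | h <;> omega

lemma onesSameParity_glue (hp : OnesSameParity p) (hq : OnesSameParity q)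
    (hpar : ∀ i j, i < L → j < L → p i = 1 → q j = 1 → (n + j) % 2 = i % 2) :
    OnesSameParity (glue p q L n D) := by
  intro i j hi hj
  rcases glue_eq_one hi with ⟨hiL, hi⟩ | ⟨hin, hiL, hi⟩ <;>
    rcases glue_eq_one hj with ⟨hjL, hj⟩ | ⟨hjn, hjL, hj⟩
  · exact hp i j hi hj
  · have := hpar i (j - n) hiL (by omega) hi hj; omega
  · have := hpar j (i - n) hjL (by omega) hj hi; omega
  · have := hq _ _ hi hj; omega

lemma admissible_glue (hp : Admissible p) (hq : Admissible q) (hL : 1 ≤ L)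
    (hn : L + 2 * window (2 * L) ≤ n)
    (hpar : ∀ i j, i < L → j < L → p i = 1 → q j = 1 → (n + j) % 2 = i % 2) :
    Admissible (glue p q L n (window (2 * L))) :=
  ⟨onesSameParity_glue hp.1 hq.1 hpar, eventsSparse_glue hp.2 hq.2 hL hn⟩

end Glue

lemma exists_mem_cylinders_iterate_mem {p q : Space} {L n : ℕ} (hL : 1 ≤ L)
    (hn : L + 2 * window (2 * L) ≤ n)
    (hpar : ∀ i j, i < L → j < L → p.1 i = 1 → q.1 j = 1 → (n + j) % 2 = i % 2) :
    ∃ y : Space, (∀ i < L, y.1 i = p.1 i) ∧ ∀ i < L, (shift^[n] y).1 i = q.1 i := by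
  refine ⟨⟨glue p.1 q.1 L n _, admissible_glue p.2 q.2 hL hn hpar⟩, fun i hi => ?_, fun i hi => ?_⟩
  · simp [glue, hi]
  · rw [iterate_shift_apply]
    simp only [glue]
    rw [if_neg (by omega), if_neg (by omega), if_neg (by omega), if_pos (by omega)]
    simp

lemma exists_arithProg_subset_NTset {U V : Set Space} (hU : Opene U) (hV : Opene V) :
    ∃ a, ∀ m, a + 2 * m ∈ NTset shift U V := by
  obtain ⟨p, hp⟩ := hU.2
  obtain ⟨q, hq⟩ := hV.2
  obtain ⟨NU, hNU⟩ := exists_cylinder_subset hU.1 hp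
  obtain ⟨NV, hNV⟩ := exists_cylinder_subset hV.1 hq
  set L := max NU NV + 1
  obtain ⟨r, hr⟩ : ∃ r, ∀ i j, i < L → j < L → p.1 i = 1 → q.1 j = 1 → (r + j) % 2 = i % 2 := by
    by_cases h : ∃ i₀ j₀, i₀ < L ∧ j₀ < L ∧ p.1 i₀ = 1 ∧ q.1 j₀ = 1
    · obtain ⟨i₀, j₀, -, -, hi₀, hj₀⟩ := h
      refine ⟨i₀ + j₀, fun i j _ _ hi hj => ?_⟩
      have := p.2.1 i i₀ hi hi₀
      have := q.2.1 j j₀ hj hj₀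
      omega
    · exact ⟨0, fun i j hi hj hpi hqj => absurd ⟨i, j, hi, hj, hpi, hqj⟩ h⟩
  refine ⟨2 * (L + 2 * window (2 * L)) + r, fun m => ?_⟩
  obtain ⟨y, hyp, hyq⟩ := exists_mem_cylinders_iterate_mem (L := L)
    (n := 2 * (L + 2 * window (2 * L)) + r + 2 * m) (by omega)
    (by omega) fun i j hi hj hpi hqj => by have := hr i j hi hj hpi hqj; omega
  exact ⟨y, hNU y fun i hi => hyp i (by omega), hNV _ fun i hi => hyq i (by omega)⟩

lemma exists_eventless_window {x : Seq} (hx : EventsSparse x) (Λ m : ℕ) :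
    ∃ j, m ≤ j ∧ ∀ i, j ≤ i → i < j + Λ → ¬ IsEvent x i := by
  by_contra! h
  have hblocks := le_eventCount_of_forall_block (x := x) (a := m) (Λ := Λ) (Λ + 3) fun t _ => by
    obtain ⟨i, hi₁, hi₂, hi⟩ := h (m + t * Λ) (by omega)
    exact ⟨i, hi₁, by rw [add_mul, one_mul, ← add_assoc]; exact hi₂, hi⟩
  have := (eventCount_mono (add_le_add_right (mul_le_window Λ) m)).trans (hx m Λ)
  omega

lemma eq_two_of_eventless {x : Seq} {i : ℕ} (hi : x i = 2) :
    ∀ d, (∀ t < d, ¬ IsEvent x (i + t)) → x (i + d) = 2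
  | 0, _ => hi
  | d + 1, h => by
    have := eq_two_of_eventless hi d fun t ht => h t (by omega)
    by_contra hne
    exact h d (by omega) (Or.inr ⟨this, hne⟩)

/-- An eventless stretch has no `1`s and no `2` followed by a `0`. -/
lemma run_of_eventless {x : Seq} {j h : ℕ}
    (hev : ∀ i, j ≤ i → i < j + (2 * h + 1) → ¬ IsEvent x i) :
    (∀ s ≤ h, x (j + s) = 0) ∨ ∀ s ≤ h, x (j + h + s) = 2 := by
  by_cases hmid : x (j + h) = 2
  · exact Or.inr fun s hs =>
      eq_two_of_eventless hmid s fun t ht => hev _ (by omega) (by omega)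
  refine Or.inl fun s hs => ?_
  rcases fin_three_cases (x (j + s)) with h0 | h1 | h2
  · exact h0
  · exact absurd (Or.inl h1) (hev _ (by omega) (by omega))
  · refine absurd ?_ hmid
    have := eq_two_of_eventless h2 (h - s) fun t ht => hev _ (by omega) (by omega)
    rwa [add_assoc, Nat.add_sub_cancel' hs] at this

lemma const_mem_omegaT {x : Space} {c : Fin 3} (hc : c ≠ 1)
    (hruns : ∀ N m, ∃ j, m ≤ j ∧ ∀ s < N, x.1 (j + s) = c) : const c hc ∈ omegaT shift x := by
  intro G hG hcG
  obtain ⟨N, hN⟩ := exists_cylinder_subset hG hcG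
  refine Set.infinite_of_forall_exists_gt fun m => ?_
  obtain ⟨j, hj, hrun⟩ := hruns N (m + 1)
  exact ⟨j, hN _ fun i hi => by rw [iterate_shift_apply, add_comm]; exact hrun i hi, by omega⟩

lemma exists_isFixedPt_mem_omegaT (x : Space) :
    ∃ z, Function.IsFixedPt shift z ∧ z ∈ omegaT shift x := by
  by_cases h0 : ∀ N m, ∃ j, m ≤ j ∧ ∀ s < N, x.1 (j + s) = 0
  · exact ⟨_, isFixedPt_const 0 (by decide), const_mem_omegaT _ h0⟩
  push Not at h0
  obtain ⟨N₀, m₀, hN₀⟩ := h0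
  refine ⟨_, isFixedPt_const 2 (by decide), const_mem_omegaT _ fun N m => ?_⟩
  obtain ⟨j, hj, hev⟩ := exists_eventless_window x.2.2 (2 * (N + N₀) + 1) (max m m₀)
  rcases run_of_eventless hev with hzero | htwo
  · obtain ⟨s, hs, hne⟩ := hN₀ j (by omega)
    exact absurd (hzero s (by omega)) hne
  · exact ⟨j + (N + N₀), by omega, fun s hs => htwo s (by omega)⟩

theorem transCompact_shift : TransCompact shift := fun x =>
  let ⟨_, hz, hzx⟩ := exists_isFixedPt_mem_omegaT x
  ⟨_, mem_omegaNT_of_isFixedPt continuous_shift two_pos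
    (fun _ _ => exists_arithProg_subset_NTset) hz hzx⟩

lemma opene_coord_eq_one (i : ℕ) : Opene {y : Space | y.1 i = 1} :=
  ⟨(isOpen_discrete {1}).preimage ((continuous_apply i).comp continuous_subtype_val),
    singleOne i, by simp [singleOne]⟩

theorem not_totallyTransitive_shift : ¬ TotallyTransitive shift := by
  intro h
  obtain ⟨n, y, hy₀, hy₁⟩ := h 2 one_le_two _ _ (opene_coord_eq_one 0) (opene_coord_eq_one 1)
  rw [mem_preimage, ← Function.iterate_mul, mem_ofPred_eq, iterate_shift_apply] at hy₁
  have := y.2.1 _ _ hy₀ hy₁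
  omega

theorem not_proximalSystem_shift : ¬ ProximalSystem shift :=
  not_proximalSystem_of_isFixedPt (isFixedPt_const 0 (by decide)) (isFixedPt_const 2 (by decide))
    fun h => by simpa [const] using congr_fun (congrArg Subtype.val h) 0

instance : Nontrivial Space :=
  ⟨⟨const 0 (by decide), const 2 (by decide),
    fun h => by simpa [const] using congr_fun (congrArg Subtype.val h) 0⟩⟩

lemma exists_ne_forall_lt_eq (x : Space) {L : ℕ} (hL : 1 ≤ L) :
    ∃ y ≠ x, ∀ i < L, y.1 i = x.1 i := by
  set n := L + 2 * window (2 * L)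
  let y (n' : ℕ) (hn' : n ≤ n') : Space :=
    ⟨glue x.1 (fun _ => 0) L n' _, admissible_glue x.2 (const 0 (by decide)).2 hL hn'
      fun _ _ _ _ _ h => absurd h (by decide)⟩
  have hprefix : ∀ n' hn', ∀ i < L, (y n' hn').1 i = x.1 i := fun _ _ i hi => by
    simp [y, glue, hi]
  have hne : y n le_rfl ≠ y (n + 1) (by omega) := fun h => by
    have := congr_fun (congrArg Subtype.val h) (n + L)
    simp only [y, glue] at this
    split_ifs at this <;> omega
  by_cases hx : y n le_rfl = x
  · exact ⟨_, fun h => hne (hx.trans h.symm), hprefix (n + 1) (by omega)⟩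
  · exact ⟨_, hx, hprefix n le_rfl⟩

theorem nhdsNE_neBot_shift (x : Space) : (𝓝[≠] x).NeBot := by
  rw [← mem_closure_iff_nhdsWithin_neBot, Metric.mem_closure_iff]
  intro ε hε
  obtain ⟨L, hL⟩ := exists_pow_lt_of_lt_one hε one_half_lt_one
  obtain ⟨y, hyx, hy⟩ := exists_ne_forall_lt_eq x (L := L + 1) (by omega)
  refine ⟨y, hyx, ?_⟩
  rw [dist_comm]
  calc dist y x ≤ (1 / 2 : ℝ) ^ (L + 1) := dist_le_of_forall_lt_eq hy
    _ ≤ (1 / 2) ^ L := pow_le_pow_of_le_one (by norm_num) (by norm_num) (by omega)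
    _ < ε := hL

end ParityShift

/-- There exists a transitive compact, non totally transitive system;
moreover, there exists such a system which is additionally non-proximal. -/
theorem stmt3 :
    (∃ (X : Type) (_ : MetricSpace X) (_ : CompactSpace X) (_ : Nontrivial X) (T : X → X),
      (∀ x : X, (𝓝[≠] x).NeBot) ∧ Continuous T ∧ Function.Surjective T ∧
      TransCompact T ∧ ¬ TotallyTransitive T) ∧
    (∃ (X : Type) (_ : MetricSpace X) (_ : CompactSpace X) (_ : Nontrivial X) (T : X → X),
      (∀ x : X, (𝓝[≠] x).NeBot) ∧ Continuous T ∧ Function.Surjective T ∧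
      TransCompact T ∧ ¬ TotallyTransitive T ∧ ¬ ProximalSystem T) := by
  open ParityShift in
  exact ⟨⟨Space, inferInstance, inferInstance, inferInstance, shift, nhdsNE_neBot_shift,
      continuous_shift, shift_surjective, transCompact_shift, not_totallyTransitive_shift⟩,
    ⟨Space, inferInstance, inferInstance, inferInstance, shift, nhdsNE_neBot_shift,
      continuous_shift, shift_surjective, transCompact_shift, not_totallyTransitive_shift,
      not_proximalSystem_shift⟩⟩
end

section
/- There exist a weakly mixing dynamical system (X,T) and a point x ∈ X such that ω_{N_T}(x) is a proper subset of ω_T(x). -/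
open Filter Topology Set Metric

/-!
Take the spacing shift `X_P ⊆ {0,1}^ℕ` over the set `P` of non-powers of four: the sequences
whose `1`s occur at mutual distances in `P`. Since `P` is thick, any two cylinders of length `N`
can be glued at a common time independent of the cylinders, so the shift is weakly mixing.
The indicator `x` of the powers of four lies in `X_P`, and `T^(4^k) x` begins with a `1` followed
by `3·4^k - 1` zeros, so `10000…` lies in `ω_T(x)`. It does not lie in `ω_{N_T}(x)`: `x` visits
the cylinder `[1]` only at powers of four, while `[1]` returns to itself only at times in `P`.
The inclusion `ω_{N_T}(x) ⊆ ω_T(x)` holds in every infinite Hausdorff system.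
-/

open PiNat (cylinder)

section OmegaLimit

variable {X : Type*} [TopologicalSpace X] {T : X → X}

/-- Separate a point `q` from the orbit segment `p, T p, …, T^[m-1] p`: the first `m` iterates of
points near `p` then stay away from a neighbourhood of `q`. -/
theorem exists_opene_NTset_subset_Ici [T2Space X] [Infinite X] (hT : Continuous T) (m : ℕ) :
    ∃ U V : Set X, Opene U ∧ Opene V ∧ NTset T U V ⊆ Ici m := by
  obtain ⟨p⟩ := (inferInstance : Nonempty X)
  set F : Set X := (fun k => T^[k] p) '' Iio m
  have hF : F.Finite := (finite_Iio m).image _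
  obtain ⟨q, hq⟩ := hF.infinite_compl.nonempty
  obtain ⟨V, W, hV, hW, hqV, hFW, hVW⟩ :=
    SeparatedNhds.of_finite (finite_singleton q) hF (disjoint_singleton_left.2 hq)
  refine ⟨⋂ k ∈ Finset.range m, T^[k] ⁻¹' W, V, ⟨?_, p, ?_⟩, ⟨hV, q, hqV rfl⟩, ?_⟩
  · exact isOpen_biInter_finset fun k _ => hW.preimage (hT.iterate k)
  · simp only [mem_iInter, Finset.mem_range]
    exact fun k hk => hFW ⟨k, hk, rfl⟩
  · rintro n ⟨y, hyU, hyV⟩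
    by_contra! hn
    simp only [mem_iInter, Finset.mem_range] at hyU
    exact hVW.le_bot ⟨hyV, hyU n (not_le.1 hn)⟩

theorem omegaNT_subset_omegaT [T2Space X] [Infinite X] (hT : Continuous T) (x : X) :
    omegaNT T x ⊆ omegaT T x := by
  intro z hz G hG hzG
  refine infinite_of_forall_exists_gt fun m => ?_
  obtain ⟨U, V, hU, hV, hUV⟩ := exists_opene_NTset_subset_Ici hT (m + 1)
  obtain ⟨n, hnG, hnUV⟩ := hz G hG hzG U V hU hV
  exact ⟨n, hnG, hUV hnUV⟩

end OmegaLimit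

def spacingShift (P : Set ℕ) : Set (ℕ → Bool) :=
  {w | ∀ ⦃i j⦄, i < j → w i = true → w j = true → j - i ∈ P}

namespace spacingShift

variable {P : Set ℕ}

theorem isClosed : IsClosed (spacingShift P) := by
  have hopen (i : ℕ) : IsOpen {w : ℕ → Bool | w i = true} :=
    (isOpen_discrete {true}).preimage (continuous_apply i : Continuous fun w : ℕ → Bool => w i)
  have hclosed (i j : ℕ) : IsClosed {w : ℕ → Bool | w i = true → w j = true → j - i ∈ P} :=
    isClosed_imp (hopen i) (isClosed_imp (hopen j) isClosed_const)
  simpa only [spacingShift, ofPred_forall] using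
    isClosed_iInter fun i => isClosed_iInter fun j => isClosed_iInter fun _ => hclosed i j

instance : CompactSpace (spacingShift P) :=
  isCompact_iff_compactSpace.1 isClosed.isCompact

def single (k : ℕ) : spacingShift P :=
  ⟨fun m => decide (m = k), fun i j hij hi hj => by simp_all⟩

theorem single_injective : Function.Injective (single (P := P)) := fun k l h => by
  simpa [single] using congrFun (congrArg Subtype.val h) k

instance : Infinite (spacingShift P) := Infinite.of_injective _ single_injective

def shift (w : spacingShift P) : spacingShift P :=
  ⟨fun n => w.1 (n + 1), fun i j hij hi hj => by
    simpa using w.2 (Nat.succ_lt_succ hij) hi hj⟩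

theorem shift_iterate_apply (w : spacingShift P) (n m : ℕ) :
    (shift^[n] w).1 m = w.1 (m + n) := by
  induction n generalizing w with
  | zero => rfl
  | succ k ih => rw [Function.iterate_succ_apply, ih, ← add_assoc]; rfl

theorem continuous_shift : Continuous (shift (P := P)) :=
  continuous_induced_rng.2 <|
    continuous_pi fun n => (continuous_apply (n + 1)).comp continuous_subtype_val

theorem surjective_shift : Function.Surjective (shift (P := P)) := fun w => by
  refine ⟨⟨fun m => m ≠ 0 && w.1 (m - 1), fun i j hij hi hj => ?_⟩, ?_⟩
  · simp only [Bool.and_eq_true, decide_eq_true_eq] at hi hj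
    have := w.2 (show i - 1 < j - 1 by omega) hi.2 hj.2
    rwa [show j - 1 - (i - 1) = j - i by omega] at this
  · ext m
    simp [shift]

theorem eventually_cylinder_subset {z : spacingShift P} {G : Set (spacingShift P)}
    (hG : G ∈ 𝓝 z) : ∀ᶠ N in atTop, ∀ y : spacingShift P, y.1 ∈ cylinder z.1 N → y ∈ G := by
  obtain ⟨t, ht, htG⟩ := (nhds_subtype _ z ▸ hG :)
  obtain ⟨_, ⟨x, N, rfl⟩, hzx, hxt⟩ := (PiNat.isTopologicalBasis_cylinders _).mem_nhds_iff.1 ht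
  rw [← PiNat.mem_cylinder_iff_eq.1 hzx] at hxt
  exact eventually_atTop.2 ⟨N, fun M hM y hy => htG (hxt (PiNat.cylinder_anti _ hM hy))⟩

def glue (a b : ℕ → Bool) (N n : ℕ) : ℕ → Bool := fun m =>
  if m < N then a m else if n ≤ m ∧ m < n + N then b (m - n) else false

theorem glue_mem {a b : ℕ → Bool} (ha : a ∈ spacingShift P) (hb : b ∈ spacingShift P)
    {N n : ℕ} (hN : N ≤ n) (hP : ∀ p < N, ∀ q < N, n + q - p ∈ P) :
    glue a b N n ∈ spacingShift P := by
  intro i j hij hi hj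
  simp only [glue] at hi hj
  split_ifs at hi hj with hiN hjN hjn hin
  · exact ha hij hi hj
  · simpa [show n + (j - n) - i = j - i by omega] using hP i hiN (j - n) (by omega)
  · omega
  · simpa [show j - n - (i - n) = j - i by omega] using hb (show i - n < j - n by omega) hi hj

theorem exists_glue (hP : ThickSet P) (N : ℕ) : ∃ n, ∀ a b : spacingShift P,
    ∃ c : spacingShift P, c.1 ∈ cylinder a.1 N ∧ (shift^[n] c).1 ∈ cylinder b.1 N := by
  obtain ⟨m, hm⟩ := hP (2 * N)
  have hgap : ∀ p < N, ∀ q < N, m + N + q - p ∈ P := fun p hp q hq => by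
    simpa [show m + N + q - p = m + (N + q - p) by omega] using hm (N + q - p) (by omega)
  refine ⟨m + N, fun a b => ⟨⟨_, glue_mem a.2 b.2 (by omega) hgap⟩, fun i hi => ?_, fun i hi => ?_⟩⟩
  · simp [glue, hi]
  · simp [shift_iterate_apply, glue, show ¬i + (m + N) < N by omega,
      show i + (m + N) < m + N + N by omega]

theorem weaklyMixing_shift (hP : ThickSet P) : WeaklyMixing (shift (P := P)) := by
  rintro A B ⟨hA, ⟨a₁, a₂⟩, haA⟩ ⟨hB, ⟨b₁, b₂⟩, hbB⟩
  obtain ⟨u₁, hu₁, u₂, hu₂, hA'⟩ := mem_nhds_prod_iff.1 (hA.mem_nhds haA)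
  obtain ⟨v₁, hv₁, v₂, hv₂, hB'⟩ := mem_nhds_prod_iff.1 (hB.mem_nhds hbB)
  obtain ⟨N, hNu₁, hNu₂, hNv₁, hNv₂⟩ := ((eventually_cylinder_subset hu₁).and <|
    (eventually_cylinder_subset hu₂).and <| (eventually_cylinder_subset hv₁).and
      (eventually_cylinder_subset hv₂)).exists
  obtain ⟨n, hn⟩ := exists_glue hP N
  obtain ⟨c₁, hc₁a, hc₁b⟩ := hn a₁ b₁
  obtain ⟨c₂, hc₂a, hc₂b⟩ := hn a₂ b₂
  refine ⟨n, (c₁, c₂), hA' ⟨hNu₁ _ hc₁a, hNu₂ _ hc₂a⟩, ?_⟩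
  change (Prod.map shift shift)^[n] (c₁, c₂) ∈ B
  rw [Prod.map_iterate]
  exact hB' ⟨hNv₁ _ hc₁b, hNv₂ _ hc₂b⟩

/-- Two continuations of `z` beyond time `N`, one with a `true` at the gluing time and one
without, cannot both equal `z`. -/
theorem nhdsNE_neBot (hP : ThickSet P) (z : spacingShift P) : (𝓝[≠] z).NeBot := by
  rw [← mem_closure_iff_nhdsWithin_neBot, mem_closure_iff_nhds]
  intro G hG
  obtain ⟨N, hNG, hN⟩ := ((eventually_cylinder_subset hG).and (eventually_gt_atTop 0)).exists
  obtain ⟨n, hn⟩ := exists_glue hP N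
  obtain ⟨c, hcz, hc⟩ := hn z (single 0)
  obtain ⟨c', hc'z, hc'⟩ := hn z (single 1)
  have hne : c ≠ c' := by
    rintro rfl
    simpa [single] using (hc 0 hN).symm.trans (hc' 0 hN)
  by_cases hcz' : c = z
  · exact ⟨c', hNG _ hc'z, fun h => hne (hcz'.trans h.symm)⟩
  · exact ⟨c, hNG _ hcz, hcz'⟩

end spacingShift

open spacingShift

section PowersOfFour

theorem notMem_range_pow_of_lt_of_lt {b k m : ℕ} (hb : 1 < b) (h₁ : b ^ k < m)
    (h₂ : m < b ^ (k + 1)) : m ∉ range (b ^ ·) := by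
  rintro ⟨j, rfl⟩
  rw [Nat.pow_lt_pow_iff_right hb] at h₁ h₂
  omega

theorem thickSet_compl_range_pow_four : ThickSet (range (4 ^ ·))ᶜ := fun N =>
  ⟨4 ^ N + 1, fun i hi => notMem_range_pow_of_lt_of_lt (k := N) (by norm_num) (by omega) <| by
    have := Nat.lt_pow_self (n := N) (by norm_num : 1 < 4)
    rw [pow_succ]
    omega⟩

theorem pow_four_sub_pow_four_notMem_range {a b : ℕ} (h : a < b) :
    4 ^ b - 4 ^ a ∉ range (4 ^ ·) := by
  obtain ⟨k, rfl⟩ := Nat.exists_eq_add_of_lt h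
  have h₁ : 4 ^ a ≤ 4 ^ (a + k) := Nat.pow_le_pow_right (by norm_num) (by omega)
  have h₂ : 0 < 4 ^ a := by positivity
  refine notMem_range_pow_of_lt_of_lt (k := a + k) (by norm_num) ?_ (by omega)
  rw [pow_succ]
  omega

open scoped Classical in
noncomputable def powersOfFour : spacingShift (range (4 ^ ·))ᶜ :=
  ⟨fun n => decide (n ∈ range (4 ^ ·)), fun i j hij hi hj => by
    obtain ⟨a, rfl⟩ := of_decide_eq_true hi
    obtain ⟨b, rfl⟩ := of_decide_eq_true hj
    exact pow_four_sub_pow_four_notMem_range ((Nat.pow_lt_pow_iff_right (by norm_num)).1 hij)⟩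

theorem powersOfFour_apply_eq_true {n : ℕ} : powersOfFour.1 n = true ↔ n ∈ range (4 ^ ·) := by
  simp [powersOfFour]

theorem single_zero_mem_omegaT : single 0 ∈ omegaT shift powersOfFour := by
  intro G hG hzG
  obtain ⟨N, hN⟩ := (eventually_cylinder_subset (hG.mem_nhds hzG)).exists
  refine infinite_of_forall_exists_gt fun a => ⟨4 ^ (a + N), hN _ fun q hq => ?_, ?_⟩
  · rw [shift_iterate_apply]
    rcases Nat.eq_zero_or_pos q with rfl | hq₀
    · simp [powersOfFour, single]
    · have hN' := Nat.lt_pow_self (n := a + N) (by norm_num : 1 < 4)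
      have hout : q + 4 ^ (a + N) ∉ range (4 ^ ·) :=
        notMem_range_pow_of_lt_of_lt (k := a + N) (by norm_num) (by omega) (by rw [pow_succ]; omega)
      simpa [single, hq₀.ne'] using mt powersOfFour_apply_eq_true.1 hout
  · exact (Nat.lt_pow_self (by norm_num : 1 < 4)).trans_le
      (Nat.pow_le_pow_right (by norm_num) (Nat.le_add_right a N))

theorem single_zero_notMem_omegaNT : single 0 ∉ omegaNT shift powersOfFour := by
  set G : Set (spacingShift (range (4 ^ ·))ᶜ) := {w | w.1 0 = true}
  have hG : Opene G :=
    ⟨(isOpen_discrete {true}).preimage ((continuous_apply 0).comp continuous_subtype_val :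
      Continuous fun w : spacingShift (range (4 ^ ·))ᶜ => w.1 0),
      single 0, by simp [G, single]⟩
  intro h
  obtain ⟨n, hxn, w, hw₀, hwn⟩ := h G hG.1 (by simp [G, single]) G G hG hG
  simp only [NTpt, G, mem_preimage, mem_ofPred_eq, shift_iterate_apply, zero_add] at hxn hwn
  have hn : n ∈ range (4 ^ ·) := powersOfFour_apply_eq_true.1 hxn
  have hn₀ : 0 < n := by
    obtain ⟨k, rfl⟩ := hn
    positivity
  exact w.2 hn₀ hw₀ hwn (by simpa using hn)

end PowersOfFour

/-- There exist a weakly mixing system `(X,T)` and a point `x ∈ X` such that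
`ω_{N_T}(x)` is a proper subset of `ω_T(x)`. -/
theorem stmt4 :
    ∃ (X : Type) (_ : MetricSpace X) (_ : CompactSpace X) (_ : Nontrivial X)
      (T : X → X) (x : X),
      (∀ z : X, (𝓝[≠] z).NeBot) ∧ Continuous T ∧ Function.Surjective T ∧
      WeaklyMixing T ∧ omegaNT T x ⊂ omegaT T x := by
  have hP := thickSet_compl_range_pow_four
  refine ⟨_, TopologicalSpace.metrizableSpaceMetric _, inferInstance, inferInstance, shift,
    powersOfFour, nhdsNE_neBot hP, continuous_shift, surjective_shift, weaklyMixing_shift hP, ?_⟩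
  exact (ssubset_iff_of_subset (omegaNT_subset_omegaT continuous_shift _)).2
    ⟨_, single_zero_mem_omegaT, single_zero_notMem_omegaNT⟩
end

section
/- Let (X,T) be an M-system such that ω_{N_T}(x) ≠ ∅ for every minimal point x ∈ X. Then (X,T) is weakly mixing. In particular, every transitive compact M-system is weakly mixing. -/
open Filter Topology Set Metric

/-!
Pick a minimal point `x` in an opene set `U` and `z ∈ ω_{N_T}(x)`. Then `z` lies in the orbit
closure of `x`, hence in the minimal set `M` of `x`; as `M` is the ω-limit set of each of its
points, the orbit of `z` returns to `U`, say `Tᵐz ∈ U`. Feeding the neighbourhood `T⁻ᵐU` of `z`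
and the pair `U, T⁻ᵐV` into the definition of `ω_{N_T}(x)` gives `n` with
`m + n ∈ N_T(U,U) ∩ N_T(U,V)`. Together with transitivity this yields
`N_T(U,V₁) ∩ N_T(U,V₂) ≠ ∅` for all opene `U, V₁, V₂`, which is the classical criterion for
weak mixing.
-/

section Recurrence

open scoped omegaLimit

variable {X : Type*} {T : X → X}

lemma mem_NTset_preimage_iterate {U V : Set X} {k n : ℕ} :
    n ∈ NTset T U (T^[k] ⁻¹' V) ↔ k + n ∈ NTset T U V := by
  simp only [NTset, mem_ofPred_eq, ← preimage_comp, ← Function.iterate_add]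

lemma mem_NTpt_preimage_iterate {x : X} {G : Set X} {k n : ℕ} :
    n ∈ NTpt T x (T^[k] ⁻¹' G) ↔ k + n ∈ NTpt T x G := by
  simp only [NTpt, mem_ofPred_eq, mem_preimage, Function.iterate_add_apply]

lemma NTset_mono {U U' V V' : Set X} (hU : U ⊆ U') (hV : V ⊆ V') :
    NTset T U V ⊆ NTset T U' V' :=
  fun _ ⟨x, hxU, hxV⟩ ↦ ⟨x, hU hxU, hV hxV⟩

variable [TopologicalSpace X]

lemma Opene.preimage_iterate (hTc : Continuous T) (hTs : Function.Surjective T) {V : Set X}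
    (hV : Opene V) (k : ℕ) : Opene (T^[k] ⁻¹' V) :=
  ⟨hV.1.preimage (hTc.iterate k), hV.2.preimage (hTs.iterate k)⟩

lemma Opene.inter_preimage_iterate (hTc : Continuous T) {U V : Set X} (hU : IsOpen U)
    (hV : IsOpen V) {k : ℕ} (hk : k ∈ NTset T U V) : Opene (U ∩ T^[k] ⁻¹' V) :=
  ⟨hU.inter (hV.preimage (hTc.iterate k)), hk⟩

lemma omegaNT_subset_closure_range_iterate (x : X) :
    omegaNT T x ⊆ closure (range fun n ↦ T^[n] x) := by
  intro z hz
  rw [_root_.mem_closure_iff]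
  intro G hG hzG
  have huniv : Opene (univ : Set X) := ⟨isOpen_univ, x, trivial⟩
  obtain ⟨n, hn, -⟩ := hz G hG hzG univ univ huniv huniv
  exact ⟨T^[n] x, hn, n, rfl⟩

lemma mem_omegaLimit_iterate_iff (z y : X) :
    y ∈ ω⁺ (fun n ↦ T^[n]) {z} ↔ MapClusterPt y atTop fun n ↦ T^[n] z :=
  mem_omegaLimit_singleton_iff_mapClusterPt _ _ _ _

section OmegaLimit

variable [CompactSpace X] [T2Space X]

/-- Backward invariance needs compactness: a cluster point of `Tⁿ⁺¹z` lifts, `T` being proper,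
to a cluster point of `Tⁿz`. -/
lemma image_omegaLimit_iterate (hTc : Continuous T) (z : X) :
    T '' ω⁺ (fun n ↦ T^[n]) {z} = ω⁺ (fun n ↦ T^[n]) {z} := by
  have hshift : ∀ y, MapClusterPt y atTop (T ∘ fun n ↦ T^[n] z) ↔
      MapClusterPt y atTop fun n ↦ T^[n] z := by
    intro y
    have : (T ∘ fun n ↦ T^[n] z) = (fun n ↦ T^[n] z) ∘ (· + 1) := by
      funext n
      exact (Function.iterate_succ_apply' T n z).symm
    rw [this, mapClusterPt_comp, map_add_atTop_eq_nat]
  ext y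
  simp only [mem_image, mem_omegaLimit_iterate_iff]
  constructor
  · rintro ⟨w, hw, rfl⟩
    exact (hshift _).1 (hw.continuousAt_comp hTc.continuousAt)
  · intro hy
    exact hTc.isProperMap.clusterPt_of_mapClusterPt ((hshift y).2 hy) |>.imp
      fun w ⟨hwy, hw⟩ ↦ ⟨hw, hwy⟩

end OmegaLimit

namespace IsMinimalSubset

variable {M : Set X}

lemma mapsTo (hM : IsMinimalSubset T M) : MapsTo T M M :=
  mapsTo_iff_image_subset.2 hM.2.2.1.subset

lemma closure_range_iterate_subset (hM : IsMinimalSubset T M) {x : X} (hx : x ∈ M) :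
    closure (range fun n ↦ T^[n] x) ⊆ M :=
  closure_minimal (range_subset_iff.2 fun n ↦ hM.mapsTo.iterate n hx) hM.2.1

lemma omegaLimit_iterate_eq [CompactSpace X] [T2Space X] (hM : IsMinimalSubset T M)
    (hTc : Continuous T) {z : X} (hz : z ∈ M) : ω⁺ (fun n ↦ T^[n]) {z} = M := by
  refine hM.2.2.2 _ ?_ (nonempty_omegaLimit _ _ _ (singleton_nonempty z))
    (isClosed_omegaLimit _ _ _) (image_omegaLimit_iterate hTc z)
  refine (omegaLimit_subset_closure_image2 _ _ _ univ_mem).trans ?_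
  rw [image2_singleton_right, image_univ]
  exact hM.closure_range_iterate_subset hz

lemma exists_iterate_mem [CompactSpace X] [T2Space X] (hM : IsMinimalSubset T M)
    (hTc : Continuous T) {x z : X} (hx : x ∈ M) (hz : z ∈ M)
    {U : Set X} (hU : IsOpen U) (hxU : x ∈ U) :
    ∃ m, T^[m] z ∈ U := by
  rw [← hM.omegaLimit_iterate_eq hTc hz, mem_omegaLimit_iterate_iff] at hx
  exact (hx.frequently (hU.mem_nhds hxU)).exists

end IsMinimalSubset

lemma nonempty_NTset_self_inter [CompactSpace X] [T2Space X] (hTc : Continuous T)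
    (hTs : Function.Surjective T) (hdense : Dense {x : X | IsMinimalPoint T x})
    (homega : ∀ x : X, IsMinimalPoint T x → (omegaNT T x).Nonempty)
    {U V : Set X} (hU : Opene U) (hV : Opene V) :
    (NTset T U U ∩ NTset T U V).Nonempty := by
  obtain ⟨x, hxmin, hxU⟩ := hdense.exists_mem_open hU.1 hU.2
  obtain ⟨z, hz⟩ := homega x hxmin
  obtain ⟨M, hM, hxM⟩ := hxmin
  have hzM : z ∈ M :=
    hM.closure_range_iterate_subset hxM (omegaNT_subset_closure_range_iterate x hz)
  obtain ⟨m, hmU⟩ := hM.exists_iterate_mem hTc hxM hzM hU.1 hxU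
  obtain ⟨n, hnx, hnUV⟩ := hz (T^[m] ⁻¹' U) (hU.1.preimage (hTc.iterate m)) hmU U (T^[m] ⁻¹' V)
    hU (hV.preimage_iterate hTc hTs m)
  exact ⟨m + n, ⟨x, hxU, mem_NTpt_preimage_iterate.1 hnx⟩, mem_NTset_preimage_iterate.1 hnUV⟩

lemma nonempty_NTset_inter_of_self_inter (hTc : Continuous T) (hTs : Function.Surjective T)
    (htr : TopTransitive T)
    (hret : ∀ U V : Set X, Opene U → Opene V → (NTset T U U ∩ NTset T U V).Nonempty)
    {U V₁ V₂ : Set X} (hU : Opene U) (hV₁ : Opene V₁) (hV₂ : Opene V₂) :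
    (NTset T U V₁ ∩ NTset T U V₂).Nonempty := by
  obtain ⟨k, hk⟩ := htr U V₁ hU hV₁
  have hW := Opene.inter_preimage_iterate hTc hU.1 hV₁.1 hk
  obtain ⟨n, hnW, hnV₂⟩ := hret _ _ hW (hV₂.preimage_iterate hTc hTs k)
  have hnV₁ : n ∈ NTset T U (T^[k] ⁻¹' V₁) := NTset_mono inter_subset_left inter_subset_right hnW
  exact ⟨k + n, mem_NTset_preimage_iterate.1 hnV₁,
    NTset_mono inter_subset_left subset_rfl (mem_NTset_preimage_iterate.1 hnV₂)⟩

lemma weaklyMixing_of_nonempty_NTset_inter (hTc : Continuous T) (hTs : Function.Surjective T)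
    (h : ∀ U V₁ V₂ : Set X, Opene U → Opene V₁ → Opene V₂ →
      (NTset T U V₁ ∩ NTset T U V₂).Nonempty) :
    WeaklyMixing T := by
  rintro U V ⟨hUo, ⟨a, b⟩, habU⟩ ⟨hVo, ⟨c, d⟩, hcdV⟩
  obtain ⟨U₁, U₂, hU₁, hU₂, haU₁, hbU₂, hUsub⟩ := isOpen_prod_iff.1 hUo a b habU
  obtain ⟨V₁, V₂, hV₁, hV₂, hcV₁, hdV₂, hVsub⟩ := isOpen_prod_iff.1 hVo c d hcdV
  obtain ⟨k, hk, -⟩ := h U₁ U₂ U₂ ⟨hU₁, a, haU₁⟩ ⟨hU₂, b, hbU₂⟩ ⟨hU₂, b, hbU₂⟩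
  obtain ⟨n, ⟨p, hpW, hpV₁⟩, ⟨q, hqW, hqV₂⟩⟩ := h _ V₁ _
    (Opene.inter_preimage_iterate hTc hU₁ hU₂ hk) ⟨hV₁, c, hcV₁⟩
    (Opene.preimage_iterate hTc hTs ⟨hV₂, d, hdV₂⟩ k)
  refine ⟨n, (p, T^[k] q), hUsub ⟨hpW.1, hqW.2⟩, ?_⟩
  have hiter : (fun p : X × X ↦ (T p.1, T p.2))^[n] = Prod.map T^[n] T^[n] :=
    Prod.map_iterate T T n
  rw [mem_preimage, hiter]
  refine hVsub ⟨hpV₁, ?_⟩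
  rw [Prod.map_snd, Function.Commute.iterate_iterate_self T n k q]
  exact hqV₂

end Recurrence

theorem stmt5_general {X : Type*} [MetricSpace X] [CompactSpace X]
    {T : X → X} (hTc : Continuous T) (hTs : Function.Surjective T)
    (hM : MSystem T) :
    ((∀ x : X, IsMinimalPoint T x → (omegaNT T x).Nonempty) → WeaklyMixing T) ∧
    (TransCompact T → WeaklyMixing T) := by
  have main (homega : ∀ x : X, IsMinimalPoint T x → (omegaNT T x).Nonempty) : WeaklyMixing T :=
    weaklyMixing_of_nonempty_NTset_inter hTc hTs fun _ _ _ ↦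
      nonempty_NTset_inter_of_self_inter hTc hTs hM.1 fun _ _ ↦
        nonempty_NTset_self_inter hTc hTs hM.2 homega
  exact ⟨main, fun hTC ↦ main fun x _ ↦ hTC x⟩

/-- An M-system with `ω_{N_T}(x) ≠ ∅` for every minimal point `x` is weakly
mixing; in particular, every transitive compact M-system is weakly mixing. -/
theorem stmt5 {X : Type*} [MetricSpace X] [CompactSpace X] [Nontrivial X]
    (hperf : ∀ x : X, (𝓝[≠] x).NeBot)
    {T : X → X} (hTc : Continuous T) (hTs : Function.Surjective T)
    (hM : MSystem T) :
    ((∀ x : X, IsMinimalPoint T x → (omegaNT T x).Nonempty) → WeaklyMixing T) ∧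
    (TransCompact T → WeaklyMixing T) :=
  stmt5_general hTc hTs hM
end
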